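/- For every ε > 0 there exists a constant C_ε > 0 such that for all a = (a₁,a₂,a₃) ∈ (ℤ∖{0})³ and all real numbers σ₁,σ₂,σ₃,τ₁,τ₂,τ₃ with 2/3 + ε < σᵢ ≤ 11/12 and 2/3 + ε < τᵢ ≤ 11/12 for all i, one has Σ over (n₁,n₂,n₃,m₁,m₂,m₃) ∈ (ℤ∖{0})⁶ with a₁n₁m₁ + a₂n₂m₂ + a₃n₃m₃ = 0 of 1/(|n₁|^{σ₁}|m₁|^{τ₁}|n₂|^{σ₂}|m₂|^{τ₂}|n₃|^{σ₃}|m₃|^{τ₃}) ≤ C_ε. In particular the bound is uniform in a. -/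

import Mathlib

/-!
Write `kᵢ = nᵢ mᵢ`. Since every exponent exceeds `s + δ` with `s = 2/3 + ε/2`, `δ = ε/2`, the
summand is at most `|k₁ k₂ k₃|^{-(s+δ)}`. If `|k₃|` is the largest of the `|kᵢ|`, then
`|k₃|^s ≥ |k₁ k₂|^{s/2}`, so this is at most `|k₃|^{-δ} |k₁|^{-p} |k₂|^{-p}` with `p = 3s/2 > 1`.
Now sum freely over `(n₁, m₁, n₂, m₂)`, which costs `(∑_k |k|^{-p})⁴`; the relation then fixes
`k₃` (as `a₃ ≠ 0`), which has `2 d(|k₃|) ≪_δ |k₃|^δ` factorisations `n₃ m₃`, and the divisor bound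
absorbs the factor `|k₃|^{-δ}`. Nothing depends on `a` beyond `aᵢ ≠ 0`.
-/

open Finset
open scoped ENNReal

lemma add_one_le_mul_pow {r : ℝ} (hr : 1 < r) (k : ℕ) :
    (k : ℝ) + 1 ≤ (1 + 1 / (r - 1)) * r ^ k := by
  have hr' : 0 < r - 1 := by linarith
  have bernoulli : 1 + k * (r - 1) ≤ r ^ k := by
    simpa using one_add_mul_le_pow (a := r - 1) (by linarith) k
  have hk : (k : ℝ) ≤ r ^ k / (r - 1) := by
    rw [le_div_iff₀ hr']; nlinarith [one_le_pow₀ (n := k) hr.le]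
  have : (1 + 1 / (r - 1)) * r ^ k = r ^ k + r ^ k / (r - 1) := by field_simp
  linarith [one_le_pow₀ (n := k) hr.le]

theorem Int.card_divisorsAntidiag (z : ℤ) :
    #z.divisorsAntidiag = 2 * #z.natAbs.divisors := by
  rw [← Finset.card_image_of_injOn (f := Prod.fst), Int.image_fst_divisorsAntidiag]
  · rw [Int.divisors, Finset.card_disjUnion, Finset.card_map, Finset.card_map, two_mul]
  · rintro ⟨a, b⟩ hab ⟨c, d⟩ hcd (rfl : a = c)
    simp only [Finset.mem_coe, Int.mem_divisorsAntidiag] at hab hcd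
    have ha : a ≠ 0 := by rintro rfl; simp_all
    simp only [Prod.mk.injEq, true_and]
    exact mul_left_cancel₀ ha (hab.1.trans hcd.1.symm)

lemma add_one_le_mul_rpow_pow {δ : ℝ} (hδ : 0 < δ) {q : ℕ} (hq : 2 ≤ q) (k : ℕ) :
    (k : ℝ) + 1 ≤
      (if q < ⌈(2 : ℝ) ^ (1 / δ)⌉₊ then 1 + 1 / ((2 : ℝ) ^ δ - 1) else 1) * ((q : ℝ) ^ k) ^ δ := by
  have hpow : ((q : ℝ) ^ k) ^ δ = ((q : ℝ) ^ δ) ^ k := by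
    rw [← Real.rpow_natCast, ← Real.rpow_mul (by positivity), mul_comm,
      Real.rpow_mul (by positivity), Real.rpow_natCast]
  rw [hpow]
  split_ifs with hsmall
  · have hr : 1 < (2 : ℝ) ^ δ := Real.one_lt_rpow (by norm_num) hδ
    have : 0 < 1 / ((2 : ℝ) ^ δ - 1) := one_div_pos.mpr (by linarith)
    calc (k : ℝ) + 1 ≤ (1 + 1 / ((2 : ℝ) ^ δ - 1)) * ((2 : ℝ) ^ δ) ^ k := add_one_le_mul_pow hr k
      _ ≤ _ := by gcongr; exact_mod_cast hq
  · have hq2δ : (2 : ℝ) ≤ (q : ℝ) ^ δ := by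
      have h := Real.rpow_le_rpow (by positivity)
        ((Nat.le_ceil _).trans (Nat.cast_le.mpr (not_lt.mp hsmall))) hδ.le
      rwa [← Real.rpow_mul (by norm_num), one_div_mul_cancel hδ.ne', Real.rpow_one] at h
    calc (k : ℝ) + 1 ≤ 2 ^ k := by exact_mod_cast Nat.lt_two_pow_self
      _ ≤ ((q : ℝ) ^ δ) ^ k := by gcongr
      _ = 1 * ((q : ℝ) ^ δ) ^ k := (one_mul _).symm

theorem exists_card_divisors_le_mul_rpow {δ : ℝ} (hδ : 0 < δ) :
    ∃ C : ℝ, ∀ n : ℕ, n ≠ 0 → (#n.divisors : ℝ) ≤ C * (n : ℝ) ^ δ := by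
  set P := ⌈(2 : ℝ) ^ (1 / δ)⌉₊
  set B : ℝ := 1 + 1 / ((2 : ℝ) ^ δ - 1)
  have hB : 1 ≤ B := by
    have : 0 < (2 : ℝ) ^ δ - 1 := by linarith [Real.one_lt_rpow (by norm_num : (1 : ℝ) < 2) hδ]
    simp only [B]; linarith [one_div_pos.mpr this]
  refine ⟨B ^ P, fun n hn => ?_⟩
  have hcard : (#n.divisors : ℝ) = ∏ q ∈ n.primeFactors, ((n.factorization q : ℝ) + 1) := by
    rw [Nat.card_divisors hn]; push_cast; rfl
  have hpow : (n : ℝ) ^ δ = ∏ q ∈ n.primeFactors, ((q : ℝ) ^ n.factorization q) ^ δ := by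
    conv_lhs => rw [← Nat.prod_factorization_pow_eq_self hn]
    rw [Finsupp.prod, Nat.support_factorization, Nat.cast_prod,
      Real.finsetProd_rpow _ _ (fun _ _ => by positivity)]
    push_cast; rfl
  have hsmall : ∏ q ∈ n.primeFactors, (if q < P then B else 1) ≤ B ^ P := by
    rw [Finset.prod_ite, Finset.prod_const, Finset.prod_const_one, mul_one]
    refine pow_le_pow_right₀ hB
      ((Finset.card_le_card fun q hq => ?_).trans_eq (Finset.card_range P))
    exact Finset.mem_range.mpr (Finset.mem_filter.mp hq).2
  calc (#n.divisors : ℝ)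
      ≤ ∏ q ∈ n.primeFactors, (if q < P then B else 1) * ((q : ℝ) ^ n.factorization q) ^ δ := by
        rw [hcard]
        exact Finset.prod_le_prod (fun _ _ => by positivity)
          fun q hq => add_one_le_mul_rpow_pow hδ (Nat.prime_of_mem_primeFactors hq).two_le _
    _ ≤ B ^ P * (n : ℝ) ^ δ := by
        rw [Finset.prod_mul_distrib, ← hpow]; gcongr

lemma one_le_abs_intCast {k : ℤ} (hk : k ≠ 0) : (1 : ℝ) ≤ |(k : ℝ)| := by
  exact_mod_cast Int.one_le_abs hk

noncomputable def invAbsRpow (e : ℝ) (k : ℤ) : ℝ≥0∞ := ENNReal.ofReal (1 / |(k : ℝ)| ^ e)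

lemma invAbsRpow_mul (e : ℝ) (k l : ℤ) :
    invAbsRpow e (k * l) = invAbsRpow e k * invAbsRpow e l := by
  rw [invAbsRpow, invAbsRpow, invAbsRpow, ← ENNReal.ofReal_mul (by positivity), Int.cast_mul,
    abs_mul, Real.mul_rpow (abs_nonneg _) (abs_nonneg _), one_div_mul_one_div]

lemma tsum_invAbsRpow_ne_top {p : ℝ} (hp : 1 < p) : ∑' k : ℤ, invAbsRpow p k ≠ ∞ := by
  have hsum : Summable fun k : ℤ => 1 / |(k : ℝ)| ^ p := by
    simpa [Real.rpow_neg (abs_nonneg _)] using Real.summable_abs_int_rpow hp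
  unfold invAbsRpow
  rw [← ENNReal.ofReal_tsum_of_nonneg (fun _ => by positivity) hsum]
  exact ENNReal.ofReal_ne_top

lemma tsum_invAbsRpow_mul (e : ℝ) :
    ∑' q : ℤ × ℤ, invAbsRpow e (q.1 * q.2) = (∑' k : ℤ, invAbsRpow e k) ^ 2 := by
  simp_rw [invAbsRpow_mul, ENNReal.tsum_prod', ENNReal.tsum_mul_left, ENNReal.tsum_mul_right, sq]

lemma card_divisorsAntidiag_mul_invAbsRpow_le {δ C : ℝ}
    (hC : ∀ n : ℕ, n ≠ 0 → (#n.divisors : ℝ) ≤ C * (n : ℝ) ^ δ)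
    {K : ℤ} (hK : K ≠ 0) : #K.divisorsAntidiag * invAbsRpow δ K ≤ ENNReal.ofReal (2 * C) := by
  have habs : ((K.natAbs : ℕ) : ℝ) = |(K : ℝ)| := by rw [Nat.cast_natAbs, Int.cast_abs]
  have hpos : 0 < |(K : ℝ)| ^ δ := by positivity
  rw [invAbsRpow, ← ENNReal.ofReal_natCast, ← ENNReal.ofReal_mul (by positivity), mul_one_div,
    Int.card_divisorsAntidiag]
  refine ENNReal.ofReal_le_ofReal ((div_le_iff₀ hpos).mpr ?_)
  have := hC K.natAbs (Int.natAbs_ne_zero.mpr hK)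
  rw [habs] at this
  push_cast
  linarith

lemma tsum_ite_mul_eq_le {δ C : ℝ} (hC : ∀ n : ℕ, n ≠ 0 → (#n.divisors : ℝ) ≤ C * (n : ℝ) ^ δ)
    {a : ℤ} (ha : a ≠ 0) (c : ℤ) :
    ∑' r : ℤ × ℤ, (if r.1 * r.2 ≠ 0 ∧ a * (r.1 * r.2) + c = 0 then invAbsRpow δ (r.1 * r.2) else 0)
      ≤ ENNReal.ofReal (2 * C) := by
  by_cases h : ∃ K, K ≠ 0 ∧ a * K + c = 0
  · obtain ⟨K, hK, hKc⟩ := h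
    have hterm : ∀ r : ℤ × ℤ,
        (if r.1 * r.2 ≠ 0 ∧ a * (r.1 * r.2) + c = 0 then invAbsRpow δ (r.1 * r.2) else 0)
          = if r ∈ K.divisorsAntidiag then invAbsRpow δ K else 0 := by
      intro r
      have hcond : (r.1 * r.2 ≠ 0 ∧ a * (r.1 * r.2) + c = 0) ↔ r.1 * r.2 = K := by
        refine ⟨fun h => mul_left_cancel₀ ha (by linarith [h.2]), ?_⟩
        rintro rfl
        exact ⟨hK, hKc⟩
      simp only [hcond, Int.mem_divisorsAntidiag, hK, ne_eq, not_false_eq_true, and_true]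
      split_ifs with hr <;> simp [hr]
    rw [tsum_congr hterm, tsum_eq_sum (s := K.divisorsAntidiag) (fun r hr => if_neg hr),
      Finset.sum_ite_mem, Finset.inter_self, Finset.sum_const, nsmul_eq_mul]
    exact card_divisorsAntidiag_mul_invAbsRpow_le hC hK
  · push Not at h
    rw [tsum_congr fun r => if_neg fun hr => h _ hr.1 hr.2, tsum_zero]
    exact zero_le

lemma tsum_tsum_tsum_ite_linear_le {δ C : ℝ}
    (hC : ∀ n : ℕ, n ≠ 0 → (#n.divisors : ℝ) ≤ C * (n : ℝ) ^ δ)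
    {a : ℤ} (ha : a ≠ 0) (b c : ℤ) (p : ℝ) :
    ∑' q : ℤ × ℤ, ∑' q' : ℤ × ℤ, ∑' r : ℤ × ℤ,
      (if r.1 * r.2 ≠ 0 ∧ a * (r.1 * r.2) + (b * (q.1 * q.2) + c * (q'.1 * q'.2)) = 0 then
        invAbsRpow δ (r.1 * r.2) * (invAbsRpow p (q.1 * q.2) * invAbsRpow p (q'.1 * q'.2)) else 0)
      ≤ ENNReal.ofReal (2 * C) * (∑' k : ℤ, invAbsRpow p k) ^ 4 := by
  calc _ ≤ ∑' q : ℤ × ℤ, ∑' q' : ℤ × ℤ,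
          ENNReal.ofReal (2 * C) * (invAbsRpow p (q.1 * q.2) * invAbsRpow p (q'.1 * q'.2)) := by
        gcongr with q q'
        simp_rw [← ite_zero_mul]
        rw [ENNReal.tsum_mul_right]
        gcongr
        exact tsum_ite_mul_eq_le hC ha _
    _ = _ := by
        simp_rw [ENNReal.tsum_mul_left, ENNReal.tsum_mul_right, tsum_invAbsRpow_mul]
        ring

lemma one_div_mul_mul_rpow_le_of_le {s δ x y z : ℝ} (hs : 0 < s) (hδ : 0 < δ)
    (hx : 1 ≤ x) (hy : 1 ≤ y) (hxz : x ≤ z) (hyz : y ≤ z) :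
    1 / (x * y * z) ^ (s + δ) ≤ 1 / z ^ δ * (1 / x ^ (3 * s / 2) * (1 / y ^ (3 * s / 2))) := by
  have hx0 : 0 < x := by linarith
  have hy0 : 0 < y := by linarith
  have hz0 : 0 < z := by linarith
  have hsplit : ∀ u : ℝ, 0 < u → u ^ (3 * s / 2) = u ^ s * u ^ (s / 2) := fun u hu => by
    rw [← Real.rpow_add hu]; ring_nf
  rw [one_div_mul_one_div, one_div_mul_one_div]
  refine one_div_le_one_div_of_le (by positivity) ?_
  calc z ^ δ * (x ^ (3 * s / 2) * y ^ (3 * s / 2))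
      = z ^ δ * (x ^ s * y ^ s) * (x ^ (s / 2) * y ^ (s / 2)) := by
        rw [hsplit x hx0, hsplit y hy0]; ring
    _ ≤ z ^ δ * (x ^ (s + δ) * y ^ (s + δ)) * (z ^ (s / 2) * z ^ (s / 2)) := by
        gcongr <;> linarith
    _ = (x * y * z) ^ (s + δ) := by
        rw [Real.mul_rpow (by positivity) hz0.le, Real.mul_rpow hx0.le hy0.le,
          Real.rpow_add hz0 s δ, ← Real.rpow_add hz0]
        ring_nf

lemma one_div_mul_mul_rpow_le {s δ x y z : ℝ} (hs : 0 < s) (hδ : 0 < δ)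
    (hx : 1 ≤ x) (hy : 1 ≤ y) (hz : 1 ≤ z) :
    1 / (x * y * z) ^ (s + δ) ≤
      1 / x ^ δ * (1 / y ^ (3 * s / 2) * (1 / z ^ (3 * s / 2))) +
      1 / y ^ δ * (1 / x ^ (3 * s / 2) * (1 / z ^ (3 * s / 2))) +
      1 / z ^ δ * (1 / x ^ (3 * s / 2) * (1 / y ^ (3 * s / 2))) := by
  have h₁ : 0 ≤ 1 / x ^ δ * (1 / y ^ (3 * s / 2) * (1 / z ^ (3 * s / 2))) := by positivity
  have h₂ : 0 ≤ 1 / y ^ δ * (1 / x ^ (3 * s / 2) * (1 / z ^ (3 * s / 2))) := by positivity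
  have h₃ : 0 ≤ 1 / z ^ δ * (1 / x ^ (3 * s / 2) * (1 / y ^ (3 * s / 2))) := by positivity
  rcases le_total x y with hxy | hyx
  · rcases le_total y z with hyz | hzy
    · linarith [one_div_mul_mul_rpow_le_of_le hs hδ hx hy (hxy.trans hyz) hyz]
    · have := one_div_mul_mul_rpow_le_of_le hs hδ hx hz hxy hzy
      rw [mul_right_comm] at this; linarith
  · rcases le_total x z with hxz | hzx
    · linarith [one_div_mul_mul_rpow_le_of_le hs hδ hx hy hxz (hyx.trans hxz)]
    · have := one_div_mul_mul_rpow_le_of_le hs hδ hy hz hyx hzx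
      rw [mul_comm, ← mul_assoc] at this; linarith

/-- With `p = 3s/2`, the `i`-th term dominates `|k₁ k₂ k₃|^{-(s+δ)}` when `|kᵢ|` is the largest
of the three; given the other two, the linear relation leaves at most one value of `kᵢ`. -/
noncomputable def majorant (a₁ a₂ a₃ : ℤ) (δ p : ℝ) (k₁ k₂ k₃ : ℤ) : ℝ≥0∞ :=
  (if k₁ ≠ 0 ∧ a₁ * k₁ + (a₂ * k₂ + a₃ * k₃) = 0 then
      invAbsRpow δ k₁ * (invAbsRpow p k₂ * invAbsRpow p k₃) else 0) +
  (if k₂ ≠ 0 ∧ a₂ * k₂ + (a₁ * k₁ + a₃ * k₃) = 0 then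
      invAbsRpow δ k₂ * (invAbsRpow p k₁ * invAbsRpow p k₃) else 0) +
  (if k₃ ≠ 0 ∧ a₃ * k₃ + (a₁ * k₁ + a₂ * k₂) = 0 then
      invAbsRpow δ k₃ * (invAbsRpow p k₁ * invAbsRpow p k₂) else 0)

lemma ofReal_one_div_rpow_le_majorant {a₁ a₂ a₃ k₁ k₂ k₃ : ℤ} {s δ : ℝ} (hs : 0 < s) (hδ : 0 < δ)
    (hk₁ : k₁ ≠ 0) (hk₂ : k₂ ≠ 0) (hk₃ : k₃ ≠ 0) (h : a₁ * k₁ + a₂ * k₂ + a₃ * k₃ = 0) :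
    ENNReal.ofReal (1 / (|(k₁ : ℝ)| * |(k₂ : ℝ)| * |(k₃ : ℝ)|) ^ (s + δ)) ≤
      majorant a₁ a₂ a₃ δ (3 * s / 2) k₁ k₂ k₃ := by
  rw [majorant, if_pos ⟨hk₁, by linear_combination h⟩, if_pos ⟨hk₂, by linear_combination h⟩,
    if_pos ⟨hk₃, by linear_combination h⟩]
  refine (ENNReal.ofReal_le_ofReal (one_div_mul_mul_rpow_le hs hδ
    (one_le_abs_intCast hk₁) (one_le_abs_intCast hk₂) (one_le_abs_intCast hk₃))).trans_eq ?_
  rw [ENNReal.ofReal_add (by positivity) (by positivity),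
    ENNReal.ofReal_add (by positivity) (by positivity)]
  have ofReal_one_div_mul (k : ℤ) (e y : ℝ) :
      ENNReal.ofReal (1 / |(k : ℝ)| ^ e * y) = invAbsRpow e k * ENNReal.ofReal y :=
    ENNReal.ofReal_mul (by positivity)
  simp only [ofReal_one_div_mul]
  rfl

lemma tsum_majorant_le {δ C : ℝ} (hC : ∀ n : ℕ, n ≠ 0 → (#n.divisors : ℝ) ≤ C * (n : ℝ) ^ δ)
    {a₁ a₂ a₃ : ℤ} (ha₁ : a₁ ≠ 0) (ha₂ : a₂ ≠ 0) (ha₃ : a₃ ≠ 0) (p : ℝ) :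
    ∑' t : (ℤ × ℤ) × (ℤ × ℤ) × (ℤ × ℤ),
        majorant a₁ a₂ a₃ δ p (t.1.1 * t.1.2) (t.2.1.1 * t.2.1.2) (t.2.2.1 * t.2.2.2)
      ≤ 3 * (ENNReal.ofReal (2 * C) * (∑' k : ℤ, invAbsRpow p k) ^ 4) := by
  have tsum_triple (f : (ℤ × ℤ) × (ℤ × ℤ) × (ℤ × ℤ) → ℝ≥0∞) :
      ∑' t, f t = ∑' (q₁ : ℤ × ℤ) (q₂ : ℤ × ℤ) (q₃ : ℤ × ℤ), f (q₁, q₂, q₃) := by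
    rw [ENNReal.tsum_prod']
    exact tsum_congr fun _ => ENNReal.tsum_prod'
  rw [tsum_triple]
  simp only [majorant, ENNReal.tsum_add]
  rw [show (3 : ℝ≥0∞) = 1 + 1 + 1 by norm_num, add_mul, add_mul, one_mul]
  gcongr
  · rw [ENNReal.tsum_comm]
    refine (tsum_congr fun q₂ => ENNReal.tsum_comm).trans_le ?_
    exact tsum_tsum_tsum_ite_linear_le hC ha₁ a₂ a₃ p
  · refine (tsum_congr fun q₁ => ENNReal.tsum_comm).trans_le ?_
    exact tsum_tsum_tsum_ite_linear_le hC ha₂ a₁ a₃ p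
  · exact tsum_tsum_tsum_ite_linear_le hC ha₃ a₁ a₂ p

lemma mul_rpow_le_rpow_mul_rpow {x y s σ τ : ℝ} (hx : 1 ≤ x) (hy : 1 ≤ y) (hσ : s ≤ σ)
    (hτ : s ≤ τ) : (x * y) ^ s ≤ x ^ σ * y ^ τ := by
  rw [Real.mul_rpow (by linarith) (by linarith)]
  gcongr

lemma one_div_abs_rpow_le {n₁ n₂ n₃ m₁ m₂ m₃ : ℤ} (hn₁ : n₁ ≠ 0) (hn₂ : n₂ ≠ 0) (hn₃ : n₃ ≠ 0)
    (hm₁ : m₁ ≠ 0) (hm₂ : m₂ ≠ 0) (hm₃ : m₃ ≠ 0) {s σ₁ σ₂ σ₃ τ₁ τ₂ τ₃ : ℝ}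
    (hσ₁ : s ≤ σ₁) (hσ₂ : s ≤ σ₂) (hσ₃ : s ≤ σ₃) (hτ₁ : s ≤ τ₁) (hτ₂ : s ≤ τ₂) (hτ₃ : s ≤ τ₃) :
    1 / (|(n₁ : ℝ)| ^ σ₁ * |(m₁ : ℝ)| ^ τ₁ * |(n₂ : ℝ)| ^ σ₂ * |(m₂ : ℝ)| ^ τ₂ *
        |(n₃ : ℝ)| ^ σ₃ * |(m₃ : ℝ)| ^ τ₃) ≤
      1 / (|((n₁ * m₁ : ℤ) : ℝ)| * |((n₂ * m₂ : ℤ) : ℝ)| * |((n₃ * m₃ : ℤ) : ℝ)|) ^ s := by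
  have h₁ := mul_rpow_le_rpow_mul_rpow (one_le_abs_intCast hn₁) (one_le_abs_intCast hm₁) hσ₁ hτ₁
  have h₂ := mul_rpow_le_rpow_mul_rpow (one_le_abs_intCast hn₂) (one_le_abs_intCast hm₂) hσ₂ hτ₂
  have h₃ := mul_rpow_le_rpow_mul_rpow (one_le_abs_intCast hn₃) (one_le_abs_intCast hm₃) hσ₃ hτ₃
  refine one_div_le_one_div_of_le (by positivity) ?_
  simp only [Int.cast_mul, abs_mul]
  rw [Real.mul_rpow (by positivity) (by positivity), Real.mul_rpow (by positivity) (by positivity)]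
  calc _ ≤ (|(n₁ : ℝ)| ^ σ₁ * |(m₁ : ℝ)| ^ τ₁) * (|(n₂ : ℝ)| ^ σ₂ * |(m₂ : ℝ)| ^ τ₂) *
        (|(n₃ : ℝ)| ^ σ₃ * |(m₃ : ℝ)| ^ τ₃) := by gcongr
    _ = _ := by ring

lemma tsum_le_toReal_of_tsum_ofReal_le {ι : Type*} {f : ι → ℝ} (hf : ∀ i, 0 ≤ f i) {E : ℝ≥0∞}
    (hE : E ≠ ∞) (h : ∑' i, ENNReal.ofReal (f i) ≤ E) : ∑' i, f i ≤ E.toReal :=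
  calc ∑' i, f i = ∑' i, (ENNReal.ofReal (f i)).toReal := by
        simp only [ENNReal.toReal_ofReal (hf _)]
    _ = (∑' i, ENNReal.ofReal (f i)).toReal :=
        (ENNReal.tsum_toReal_eq fun _ => ENNReal.ofReal_ne_top).symm
    _ ≤ E.toReal := ENNReal.toReal_mono hE h

/-- Uniform bound for the parabolic Eisenstein series on the real axis:
for `2/3 + ε < σᵢ, τᵢ ≤ 11/12` the sum over nonzero sextuples with
`a₁n₁m₁ + a₂n₂m₂ + a₃n₃m₃ = 0` of `1/(|n₁|^σ₁|m₁|^τ₁⋯)` is bounded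
uniformly in `a`.  Here `v.1 = (n₁, n₂, n₃)` and `v.2 = (m₁, m₂, m₃)`. -/
theorem statement7 (ε : ℝ) (hε : 0 < ε) :
    ∃ C : ℝ, 0 < C ∧ ∀ a₁ a₂ a₃ : ℤ, a₁ ≠ 0 → a₂ ≠ 0 → a₃ ≠ 0 →
      ∀ σ₁ σ₂ σ₃ τ₁ τ₂ τ₃ : ℝ,
        2 / 3 + ε < σ₁ → σ₁ ≤ 11 / 12 → 2 / 3 + ε < σ₂ → σ₂ ≤ 11 / 12 →
        2 / 3 + ε < σ₃ → σ₃ ≤ 11 / 12 → 2 / 3 + ε < τ₁ → τ₁ ≤ 11 / 12 →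
        2 / 3 + ε < τ₂ → τ₂ ≤ 11 / 12 → 2 / 3 + ε < τ₃ → τ₃ ≤ 11 / 12 →
        (∑' v : {v : (ℤ × ℤ × ℤ) × (ℤ × ℤ × ℤ) //
            v.1.1 ≠ 0 ∧ v.1.2.1 ≠ 0 ∧ v.1.2.2 ≠ 0 ∧
            v.2.1 ≠ 0 ∧ v.2.2.1 ≠ 0 ∧ v.2.2.2 ≠ 0 ∧
            a₁ * v.1.1 * v.2.1 + a₂ * v.1.2.1 * v.2.2.1 + a₃ * v.1.2.2 * v.2.2.2 = 0},
          1 / (|(v.val.1.1 : ℝ)| ^ σ₁ * |(v.val.2.1 : ℝ)| ^ τ₁ *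
            |(v.val.1.2.1 : ℝ)| ^ σ₂ * |(v.val.2.2.1 : ℝ)| ^ τ₂ *
            |(v.val.1.2.2 : ℝ)| ^ σ₃ * |(v.val.2.2.2 : ℝ)| ^ τ₃)) ≤ C := by
  obtain ⟨C, hC⟩ := exists_card_divisors_le_mul_rpow (half_pos hε)
  set p := 3 * (2 / 3 + ε / 2) / 2 with hp
  set B := 3 * (ENNReal.ofReal (2 * C) * (∑' k : ℤ, invAbsRpow p k) ^ 4)
  have hB : B ≠ ∞ := by
    have := tsum_invAbsRpow_ne_top (p := p) (by rw [hp]; linarith)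
    finiteness
  refine ⟨B.toReal + 1, by positivity, fun a₁ a₂ a₃ ha₁ ha₂ ha₃ σ₁ σ₂ σ₃ τ₁ τ₂ τ₃
    hσ₁ _ hσ₂ _ hσ₃ _ hτ₁ _ hτ₂ _ hτ₃ _ => ?_⟩
  refine (tsum_le_toReal_of_tsum_ofReal_le (fun _ => by positivity) hB ?_).trans (by linarith)
  -- `((n₁, n₂, n₃), (m₁, m₂, m₃)) ↦ ((n₁, m₁), (n₂, m₂), (n₃, m₃))`
  let toPairs := (Equiv.prodProdProdComm ℤ (ℤ × ℤ) ℤ (ℤ × ℤ)).trans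
    ((Equiv.refl (ℤ × ℤ)).prodCongr (Equiv.prodProdProdComm ℤ ℤ ℤ ℤ))
  refine (ENNReal.tsum_le_tsum fun v => ?_).trans
    ((ENNReal.tsum_comp_le_tsum_of_injective (toPairs.injective.comp Subtype.val_injective)
      fun t => majorant a₁ a₂ a₃ (ε / 2) p
        (t.1.1 * t.1.2) (t.2.1.1 * t.2.1.2) (t.2.2.1 * t.2.2.2)).trans
    (tsum_majorant_le hC ha₁ ha₂ ha₃ p))
  obtain ⟨hn₁, hn₂, hn₃, hm₁, hm₂, hm₃, hv⟩ := v.2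
  refine (ENNReal.ofReal_le_ofReal (one_div_abs_rpow_le hn₁ hn₂ hn₃ hm₁ hm₂ hm₃
    (s := 2 / 3 + ε / 2 + ε / 2) ?_ ?_ ?_ ?_ ?_ ?_)).trans ?_
  all_goals try linarith
  exact ofReal_one_div_rpow_le_majorant (by positivity) (half_pos hε) (mul_ne_zero hn₁ hm₁)
    (mul_ne_zero hn₂ hm₂) (mul_ne_zero hn₃ hm₃) (by linear_combination hv)
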